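/- arXiv:2008.06155 — 3 statements merged into one kernel-verified Lean document; each statement's English description precedes it below -/
import Mathlib

section
/- Let X be a Poisson random variable with parameter α > 0. Then for every nonnegative integer n, E[⟨X⟩_n] = B^L_n(α), i.e., the rising factorial moment Σ_{i=0}^{∞} ⟨i⟩_n e^{-α} α^i / i! equals the Lah-Bell polynomial B^L_n(α) = Σ_{k=0}^{n} L(n,k) α^k. -/
/-!
Expanding the rising factorial in falling factorials, `⟨i⟩_n = Σ_k L(n,k) (i)_k`, reduces the
claim to the Poisson factorial moments `E[(X)_k] = α^k`, which follow from
`Σ_i (i)_k x^i / i! = x^k e^x`: the first `k` terms vanish and shifting the index by `k`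
leaves `x^k` times the exponential series.
-/

open Finset

/-- The `r`-Lah numbers `L_r(n,k) = (n!/k!) * C(n+2r-1, k+2r-1)` for `k ≤ n`, and `0` otherwise. -/
def rLah (r n k : ℕ) : ℕ :=
  if k ≤ n then n.factorial / k.factorial * Nat.choose (n + 2 * r - 1) (n - k) else 0

/-- Stirling numbers of the second kind. -/
def stirling2 : ℕ → ℕ → ℕ
  | 0, 0 => 1
  | 0, _ + 1 => 0
  | _ + 1, 0 => 0
  | n + 1, k + 1 => (k + 1) * stirling2 n (k + 1) + stirling2 n k

/-- Signed Stirling numbers of the first kind, satisfying `(x)_n = Σ_k s(n,k) x^k`. -/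
def stirling1 : ℕ → ℕ → ℤ
  | 0, 0 => 1
  | 0, _ + 1 => 0
  | _ + 1, 0 => 0
  | n + 1, k + 1 => stirling1 n k - (n : ℤ) * stirling1 n (k + 1)

/-- Bell numbers. -/
def bell (n : ℕ) : ℕ := ∑ k ∈ Finset.range (n + 1), stirling2 n k

/-- The `r`-extended Bell numbers `B_{n,r} = Σ_k C(n,k) r^(n-k) B_k`. -/
def bellExt (n r : ℕ) : ℕ :=
  ∑ k ∈ Finset.range (n + 1), Nat.choose n k * r ^ (n - k) * bell k

/-- The `r`-extended Lah-Bell numbers `B^L_{n,r} = Σ_{k=0}^n L_r(n,k)`. -/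
def lahBellExt (n r : ℕ) : ℕ := ∑ k ∈ Finset.range (n + 1), rLah r n k

/-- Stirling polynomials of the second kind `S₂(n,k|x) = Σ_j C(n,j) x^(n-j) S₂(j,k)`,
evaluated at a natural number `x`. -/
def stirling2Poly (n k x : ℕ) : ℕ :=
  ∑ j ∈ Finset.Icc k n, Nat.choose n j * x ^ (n - j) * stirling2 j k

open Nat

lemma ascFactorial_eq_sum_rLah_mul_descFactorial (i n : ℕ) :
    i.ascFactorial n = ∑ k ∈ range (n + 1), rLah 0 n k * i.descFactorial k := by
  cases n with
  | zero => simp [rLah]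
  | succ m =>
    -- Vandermonde: `C(i+m, m+1) = Σ_k C(i,k) C(m, m+1-k)`
    rw [ascFactorial_eq_factorial_mul_choose', show i + (m + 1) - 1 = i + m by omega,
      add_choose_eq, Finset.Nat.sum_antidiagonal_eq_sum_range_succ_mk, mul_sum]
    refine sum_congr rfl fun k hk => ?_
    have hkm : k ≤ m + 1 := mem_range_succ_iff.mp hk
    rw [rLah, if_pos hkm, descFactorial_eq_factorial_mul_choose]
    simp only [mul_zero, add_zero, Nat.add_sub_cancel]
    rw [mul_mul_mul_comm, Nat.div_mul_cancel (factorial_dvd_factorial hkm), mul_comm (m.choose _)]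

section FactorialMoments

variable {𝕂 : Type*} [RCLike 𝕂]

lemma descFactorial_mul_pow_div_factorial_add (x : 𝕂) (j k : ℕ) :
    ((j + k).descFactorial k : 𝕂) * x ^ (j + k) / (j + k)! = x ^ k * (x ^ j / j !) := by
  have hfac : ((j + k)! : 𝕂) = j ! * (j + k).descFactorial k := by
    have h := factorial_mul_descFactorial (le_add_left k j)
    rw [Nat.add_sub_cancel] at h
    exact_mod_cast h.symm
  have hdesc : ((j + k).descFactorial k : 𝕂) ≠ 0 := by
    exact_mod_cast (descFactorial_pos.mpr (le_add_left k j)).ne'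
  rw [hfac, pow_add]
  field_simp

theorem hasSum_descFactorial_mul_pow_div_factorial (x : 𝕂) (k : ℕ) :
    HasSum (fun i : ℕ => (i.descFactorial k : 𝕂) * x ^ i / i !) (x ^ k * NormedSpace.exp x) := by
  have hinit : ∑ i ∈ range k, (i.descFactorial k : 𝕂) * x ^ i / i ! = 0 :=
    sum_eq_zero fun i hi => by simp [descFactorial_eq_zero_iff_lt.mpr (mem_range.mp hi)]
  rw [← hasSum_nat_add_iff' k, hinit, sub_zero]
  simp only [descFactorial_mul_pow_div_factorial_add]
  exact (NormedSpace.expSeries_div_hasSum_exp x).mul_left _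

end FactorialMoments

theorem poisson_ascFactorial_moment_general (α : ℝ) (n : ℕ) :
    ∑' i : ℕ, (i.ascFactorial n : ℝ) * Real.exp (-α) * α ^ i / i.factorial =
      ∑ k ∈ Finset.range (n + 1), (rLah 0 n k : ℝ) * α ^ k := by
  have hmoments := hasSum_sum fun k (_ : k ∈ range (n + 1)) =>
    (hasSum_descFactorial_mul_pow_div_factorial α k).mul_left ((rLah 0 n k : ℝ) * Real.exp (-α))
  refine (hmoments.congr_fun fun i => ?_).tsum_eq.trans (sum_congr rfl fun k _ => ?_)
  · rw [ascFactorial_eq_sum_rLah_mul_descFactorial]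
    push_cast
    rw [sum_mul, sum_mul, sum_div]
    exact sum_congr rfl fun k _ => by ring
  · rw [← Real.exp_eq_exp_ℝ, mul_mul_mul_comm, ← Real.exp_add, neg_add_cancel, Real.exp_zero,
      mul_one]

/-- For a Poisson random variable `X` with parameter `α > 0`, the rising factorial moment
`E[⟨X⟩_n] = Σ_i ⟨i⟩_n e^{-α} α^i/i!` equals the Lah-Bell polynomial `B^L_n(α) = Σ_k L(n,k) α^k`. -/
theorem poisson_ascFactorial_moment (α : ℝ) (hα : 0 < α) (n : ℕ) :
    ∑' i : ℕ, (i.ascFactorial n : ℝ) * Real.exp (-α) * α ^ i / i.factorial =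
      ∑ k ∈ Finset.range (n + 1), (rLah 0 n k : ℝ) * α ^ k :=
  poisson_ascFactorial_moment_general α n
end

section
/- Let X be a Poisson random variable with parameter α > 0 and r a nonnegative integer. Then for every nonnegative integer n, E[⟨X+2r⟩_n] = B^L_{n,r}(α), i.e., Σ_{i=0}^{∞} ⟨i+2r⟩_n e^{-α} α^i / i! = Σ_{k=0}^{n} L_r(n,k) α^k. -/
open Finset

/-! Vandermonde's identity expands the rising factorial in falling factorials,
`⟨x + 2r⟩_n = Σ_k L_r(n,k) (x)_k`, and the falling factorial moments of a Poisson variable are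
`E[(X)_k] = α^k`, since shifting the series by `k` leaves `e^{-α} α^k e^α`. -/

open Nat

theorem ascFactorial_add_two_mul_eq_sum_rLah_mul_descFactorial (r n x : ℕ) :
    (x + 2 * r).ascFactorial n = ∑ k ∈ range (n + 1), rLah r n k * x.descFactorial k := by
  rcases Nat.eq_zero_or_pos n with rfl | hn
  · simp [rLah]
  rw [Nat.ascFactorial_eq_factorial_mul_choose',
    show x + 2 * r + n - 1 = x + (n + 2 * r - 1) by omega, Nat.add_choose_eq,
    Nat.sum_antidiagonal_eq_sum_range_succ_mk, mul_sum]
  refine sum_congr rfl fun k hk => ?_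
  have hkn : k ≤ n := Nat.lt_succ_iff.mp (mem_range.mp hk)
  rw [rLah, if_pos hkn, Nat.descFactorial_eq_factorial_mul_choose]
  calc n ! * (x.choose k * (n + 2 * r - 1).choose (n - k))
      = n ! / k ! * k ! * ((n + 2 * r - 1).choose (n - k) * x.choose k) := by
        rw [Nat.div_mul_cancel (Nat.factorial_dvd_factorial hkn)]; ring
    _ = _ := by ring

theorem hasSum_descFactorial_mul_poisson (α : ℝ) (k : ℕ) :
    HasSum (fun i : ℕ => (i.descFactorial k : ℝ) * Real.exp (-α) * α ^ i / i !) (α ^ k) := by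
  have hshift : ∀ j : ℕ,
      ((j + k).descFactorial k : ℝ) * Real.exp (-α) * α ^ (j + k) / (j + k)!
        = Real.exp (-α) * α ^ k * (α ^ j / j !) := by
    intro j
    have hfac : ((j + k).descFactorial k : ℝ) * j ! = (j + k)! := by
      rw [mul_comm]
      exact_mod_cast
        Nat.add_sub_cancel j k ▸ Nat.factorial_mul_descFactorial (Nat.le_add_left k j)
    rw [← hfac, pow_add]
    field_simp
  have hexp : HasSum (fun j : ℕ => α ^ j / j !) (Real.exp α) := by
    simpa [Real.exp_eq_exp_ℝ] using NormedSpace.expSeries_div_hasSum_exp α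
  refine (hasSum_nat_add_iff' k).mp ?_
  rw [sum_eq_zero fun i hi => by
    simp [Nat.descFactorial_eq_zero_iff_lt.mpr (mem_range.mp hi)], sub_zero]
  simp only [hshift]
  have := hexp.mul_left (Real.exp (-α) * α ^ k)
  rwa [mul_right_comm, ← Real.exp_add, neg_add_cancel, Real.exp_zero, one_mul] at this

theorem poisson_shifted_ascFactorial_moment_general (α : ℝ) (n r : ℕ) :
    ∑' i : ℕ, ((i + 2 * r).ascFactorial n : ℝ) * Real.exp (-α) * α ^ i / i.factorial =
      ∑ k ∈ Finset.range (n + 1), (rLah r n k : ℝ) * α ^ k := by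
  have hterm : ∀ i : ℕ, ((i + 2 * r).ascFactorial n : ℝ) * Real.exp (-α) * α ^ i / i !
      = ∑ k ∈ range (n + 1),
          (rLah r n k : ℝ) * ((i.descFactorial k : ℝ) * Real.exp (-α) * α ^ i / i !) := by
    intro i
    rw [ascFactorial_add_two_mul_eq_sum_rLah_mul_descFactorial]
    push_cast
    rw [sum_mul, sum_mul, sum_div]
    exact sum_congr rfl fun k _ => by ring
  simp_rw [hterm]
  exact (hasSum_sum fun k _ =>
    (hasSum_descFactorial_mul_poisson α k).mul_left (rLah r n k : ℝ)).tsum_eq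

/-- For a Poisson random variable `X` with parameter `α > 0`,
`E[⟨X+2r⟩_n] = B^L_{n,r}(α)`, i.e.
`Σ_i ⟨i+2r⟩_n e^{-α} α^i/i! = Σ_k L_r(n,k) α^k`. -/
theorem poisson_shifted_ascFactorial_moment (α : ℝ) (hα : 0 < α) (n r : ℕ) :
    ∑' i : ℕ, ((i + 2 * r).ascFactorial n : ℝ) * Real.exp (-α) * α ^ i / i.factorial =
      ∑ k ∈ Finset.range (n + 1), (rLah r n k : ℝ) * α ^ k :=
  poisson_shifted_ascFactorial_moment_general α n r
end

section
/- The exponential generating function of the r-extended Lah-Bell numbers is e^{t/(1-t)} (1-t)^{-2r}, i.e., as formal power series (or for |t| < 1), Σ_{n=0}^{∞} B^L_{n,r} t^n/n! = e^{1/(1-t) - 1} (1/(1-t))^{2r}. -/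
open Finset

/-!
Expand `B^L_{n,r} t^n/n! = Σ_k L_r(n,k) t^n/n!` and sum the double series by columns instead.
For fixed `k`, `L_r(k+m,k)/(k+m)! = C(k+m+2r-1, m)/k!`, so the negative binomial series gives
`Σ_n L_r(n,k) t^n/n! = (t^k/k!) (1-t)^{-(k+2r)}`, and summing over `k` yields the exponential
series `e^{t/(1-t)} (1-t)^{-2r}`. The interchange is justified by absolute convergence: with `|t|`
in place of `t` all terms are nonnegative, so the finiteness of the iterated sum suffices.
-/

open scoped Nat

-- For `j = 0` the coefficient is `(m - 1).choose m`, which is `1` at `m = 0` and `0` otherwise.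
theorem hasSum_choose_add_sub_one_mul_pow {𝕜 : Type*} [NormedDivisionRing 𝕜] (j : ℕ) {s : 𝕜}
    (hs : ‖s‖ < 1) :
    HasSum (fun m : ℕ => ((m + j - 1).choose m : 𝕜) * s ^ m) ((1 - s)⁻¹ ^ j) := by
  cases j with
  | zero =>
    convert hasSum_single (f := fun m : ℕ => ((m + 0 - 1).choose m : 𝕜) * s ^ m) 0
      fun m hm => ?_ using 1
    · simp
    · simp [Nat.choose_eq_zero_of_lt (Nat.sub_lt (Nat.pos_of_ne_zero hm) one_pos)]
  | succ d =>
    convert hasSum_choose_mul_geometric_of_norm_lt_one d hs using 1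
    · ext m
      rw [← add_assoc, Nat.add_sub_cancel, Nat.choose_symm_add]
    · rw [one_div, inv_pow]

theorem hasSum_pow_div_factorial_mul_pow (x u : ℝ) (j : ℕ) :
    HasSum (fun k => x ^ k / k ! * u ^ (k + j)) (Real.exp (x * u) * u ^ j) := by
  rw [Real.exp_eq_exp_ℝ]
  refine ((NormedSpace.expSeries_div_hasSum_exp (x * u)).mul_right (u ^ j)).congr_fun fun k => ?_
  ring

theorem HasSum.prod_fiberwise_swap {α β γ : Type*} [AddCommMonoid α] [TopologicalSpace α]
    [ContinuousAdd α] [T3Space α] {f : β × γ → α} {g : β → α} {h : γ → α} {a : α}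
    (hga : HasSum g a) (hf : Summable f) (hg : ∀ b, HasSum (fun c => f (b, c)) (g b))
    (hh : ∀ c, HasSum (fun b => f (b, c)) (h c)) : HasSum h a := by
  have hfa : HasSum f a := (hf.hasSum.prod_fiberwise hg).unique hga ▸ hf.hasSum
  exact ((Equiv.prodComm γ β).hasSum_iff.2 hfa).prod_fiberwise hh

theorem rLah_eq_zero_of_lt {r n k : ℕ} (h : n < k) : rLah r n k = 0 := by
  simp [rLah, h.not_ge]

theorem rLah_add_mul_factorial (r k m : ℕ) :
    rLah r (k + m) k * k ! = (k + m)! * (k + m + 2 * r - 1).choose m := by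
  rw [rLah, if_pos (Nat.le_add_right k m), Nat.add_sub_cancel_left, mul_right_comm,
    Nat.div_mul_cancel (Nat.factorial_dvd_factorial (Nat.le_add_right k m))]

theorem hasSum_rLah_egf (r k : ℕ) {t : ℝ} (ht : |t| < 1) :
    HasSum (fun n => (rLah r n k : ℝ) * t ^ n / n !) (t ^ k / k ! * (1 - t)⁻¹ ^ (k + 2 * r)) := by
  rw [← hasSum_nat_add_iff' k]
  have hlow : ∑ n ∈ range k, (rLah r n k : ℝ) * t ^ n / n ! = 0 :=
    sum_eq_zero fun n hn => by rw [rLah_eq_zero_of_lt (mem_range.1 hn)]; simp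
  rw [hlow, sub_zero]
  refine ((hasSum_choose_add_sub_one_mul_pow (k + 2 * r) ht).mul_left (t ^ k / k !)).congr_fun
    fun m => ?_
  have key : (rLah r (k + m) k : ℝ) * k ! = (k + m)! * (k + m + 2 * r - 1).choose m := by
    exact_mod_cast rLah_add_mul_factorial r k m
  rw [← add_assoc, add_comm m k, pow_add]
  field_simp
  linear_combination t ^ k * t ^ m * key

theorem summable_rLah_egf (r : ℕ) {t : ℝ} (ht : |t| < 1) :
    Summable fun p : ℕ × ℕ => (rLah r p.2 p.1 : ℝ) * t ^ p.2 / p.2 ! := by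
  have ht' : |(|t|)| < 1 := by rwa [abs_abs]
  refine Summable.of_norm ?_
  simp only [Real.norm_eq_abs, abs_div, abs_mul, abs_pow, Nat.abs_cast]
  refine (summable_prod_of_nonneg fun p => by positivity).2 ⟨fun k => ?_, ?_⟩
  · exact (hasSum_rLah_egf r k ht').summable
  · simp only [(hasSum_rLah_egf r _ ht').tsum_eq]
    exact (hasSum_pow_div_factorial_mul_pow |t| (1 - |t|)⁻¹ (2 * r)).summable

theorem hasSum_lahBellExt_mul_pow_div_factorial (r n : ℕ) (t : ℝ) :
    HasSum (fun k => (rLah r n k : ℝ) * t ^ n / n !) ((lahBellExt n r : ℝ) * t ^ n / n !) := by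
  rw [lahBellExt, Nat.cast_sum, sum_mul, sum_div]
  exact hasSum_sum_of_ne_finset_zero fun k hk => by
    rw [rLah_eq_zero_of_lt (by simpa using hk)]; simp

/-- The exponential generating function of the `r`-extended Lah-Bell numbers:
for `|t| < 1`, `Σ_n B^L_{n,r} t^n/n! = e^{1/(1-t) - 1} (1/(1-t))^{2r}`,
and the series converges. -/
theorem lahBellExt_egf (r : ℕ) (t : ℝ) (ht : |t| < 1) :
    Summable (fun n : ℕ => (lahBellExt n r : ℝ) * t ^ n / n.factorial) ∧
    ∑' n : ℕ, (lahBellExt n r : ℝ) * t ^ n / n.factorial =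
      Real.exp (1 / (1 - t) - 1) * (1 / (1 - t)) ^ (2 * r) := by
  have ht1 : 1 - t ≠ 0 := by
    have := (abs_lt.1 ht).2; linarith
  have hexp : HasSum (fun k => t ^ k / k ! * (1 - t)⁻¹ ^ (k + 2 * r))
      (Real.exp (1 / (1 - t) - 1) * (1 / (1 - t)) ^ (2 * r)) := by
    convert hasSum_pow_div_factorial_mul_pow t (1 - t)⁻¹ (2 * r) using 3
    · field_simp; ring
    · rw [one_div]
  have h := hexp.prod_fiberwise_swap (summable_rLah_egf r ht)
    (fun k => hasSum_rLah_egf r k ht) (fun n => hasSum_lahBellExt_mul_pow_div_factorial r n t)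
  exact ⟨h.summable, h.tsum_eq⟩
end
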